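/- Let G be a simple graph and let W_1, …, W_m be finitely many cycles in G. Define an edge coloring c by letting c(e) be the number of indices i such that the edge e is traversed by W_i. Then for every vertex v of G: (1) the sum of c(e) over all edges e incident to v is even, and (2) for every edge e₀ incident to v, c(e₀) is less than or equal to the sum of c(e) over the remaining edges e incident to v. In particular, at every trivalent vertex the three incident edge colors form an admissible triple (even total sum and triangle inequalities). -/

import Mathlib

/-!
Double counting the pairs (cycle, edge at `v` on that cycle) splits both sums at `v` into sums
over the cycles of the number of edges of `W i` at `v`. A closed trail has an even number of
edges at every vertex, which gives the parity; and if `W i` uses `e₀` it uses at least one other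
edge at `v`, which gives the inequality cycle by cycle.
-/

open Finset

namespace Finset

variable {α ι : Type*} (r : ι → α → Prop) [∀ i a, Decidable (r i a)] {s : Finset ι} {t : Finset α}

theorem even_sum_card_filter_of_forall_even (h : ∀ i ∈ s, Even #{a ∈ t | r i a}) :
    Even (∑ a ∈ t, #{i ∈ s | r i a}) :=
  sum_card_bipartiteAbove_eq_sum_card_bipartiteBelow (s := s) (t := t) r ▸ even_sum _ h

theorem card_filter_le_sum_erase_of_forall_even [DecidableEq α]
    (h : ∀ i ∈ s, Even #{a ∈ t | r i a}) {a₀ : α} (ha₀ : a₀ ∈ t) :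
    #{i ∈ s | r i a₀} ≤ ∑ a ∈ t.erase a₀, #{i ∈ s | r i a} := by
  rw [card_filter]
  refine (sum_le_sum fun i hi => ?_).trans_eq
    (sum_card_bipartiteAbove_eq_sum_card_bipartiteBelow r)
  split_ifs with hr
  · -- `a₀` is one of evenly many, hence at least two, elements of `t` related to `i`
    have hmem : a₀ ∈ {a ∈ t | r i a} := mem_filter.2 ⟨ha₀, hr⟩
    have hpos : 0 < #{a ∈ t | r i a} := card_pos.2 ⟨a₀, hmem⟩
    obtain ⟨k, hk⟩ := h i hi
    rw [bipartiteAbove, filter_erase, card_erase_of_mem hmem]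
    omega
  · exact Nat.zero_le _

end Finset

namespace SimpleGraph.Walk

variable {V : Type*} [DecidableEq V] {G : SimpleGraph V}

theorem IsTrail.even_card_filter_incidenceFinset_mem_edges {u : V} {p : G.Walk u u}
    (hp : p.IsTrail) (v : V) [Fintype (G.neighborSet v)] :
    Even #{e ∈ G.incidenceFinset v | e ∈ p.edges} := by
  have hfilter : {e ∈ G.incidenceFinset v | e ∈ p.edges} = {e ∈ hp.edgesFinset | v ∈ e} := by
    ext e
    simp only [mem_filter, mem_incidenceFinset, incidenceSet, Set.mem_ofPred_eq]
    exact ⟨fun ⟨⟨_, hv⟩, he⟩ => ⟨he, hv⟩, fun ⟨he, hv⟩ => ⟨⟨p.edges_subset_edgeSet he, hv⟩, he⟩⟩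
  rw [hfilter, card_def, filter_val, ← Multiset.countP_eq_card_filter, Multiset.coe_countP]
  exact (hp.even_countP_edges_iff v).2 fun h => absurd rfl h

end SimpleGraph.Walk

/-- Coloring each edge of a simple graph by the number of cycles (from a given
finite family of cycles) traversing it yields a compatible coloring: at every
vertex the sum of the colors of incident edges is even, and each incident edge
color is at most the sum of the colors of the other incident edges. -/
theorem cycle_coloring_admissible {V : Type*} [Fintype V] [DecidableEq V]
    (G : SimpleGraph V) [DecidableRel G.Adj]
    (m : ℕ) (base : Fin m → V) (W : (i : Fin m) → G.Walk (base i) (base i))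
    (hW : ∀ i, (W i).IsCycle)
    (c : Sym2 V → ℕ)
    (hc : ∀ e : Sym2 V, c e = (Finset.univ.filter (fun i => e ∈ (W i).edges)).card)
    (v : V) :
    Even (∑ e ∈ G.incidenceFinset v, c e) ∧
    ∀ e₀ ∈ G.incidenceFinset v,
      c e₀ ≤ ∑ e ∈ (G.incidenceFinset v).erase e₀, c e := by
  obtain rfl : c = fun e => #{i | e ∈ (W i).edges} := funext hc
  have heven : ∀ i ∈ univ, Even #{e ∈ G.incidenceFinset v | e ∈ (W i).edges} :=
    fun i _ => (hW i).isTrail.even_card_filter_incidenceFinset_mem_edges v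
  exact ⟨even_sum_card_filter_of_forall_even _ heven,
    fun _ he₀ => card_filter_le_sum_erase_of_forall_even _ heven he₀⟩
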